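/- Let K be a field and b, c ∈ K such that the Kubert-Tate curve E(b,c) has nonzero discriminant. Then the point (0,0) on E(b,c) has order exactly 7 if and only if b² − bc − c³ = 0. -/

import Mathlib

/-- The Kubert-Tate normal form curve E(b,c) : y^2 + (1-c)xy - by = x^3 - bx^2. -/
def Ebc {K : Type*} [CommRing K] (b c : K) : WeierstrassCurve.Affine K :=
  { a₁ := 1 - c, a₂ := -b, a₃ := -b, a₄ := 0, a₆ := 0 }
/-- The point (0, 0) on E(b,c), nonsingular since the discriminant is nonzero. -/
noncomputable def P₀ {K : Type*} [Field K] (b c : K) (hΔ : (Ebc b c).Δ ≠ 0) :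
    (Ebc b c).Point :=
  .some 0 0 ((WeierstrassCurve.Affine.equation_iff_nonsingular_of_Δ_ne_zero hΔ).mp
    (WeierstrassCurve.Affine.equation_zero.mpr rfl))

/-!
Write `P = (0, 0)`. Since 7 is prime and `P ≠ 0`, `P` has order 7 iff `4P = -3P`. Explicitly
`2P = (b, bc)` and `3P = (c, b - c)`, so `-3P = (c, c²)`. If `c = 0` then `2P` is 2-torsion,
so `4P = 0 ≠ -3P`, while `b² - bc - c³ = b² ≠ 0`. Otherwise the tangent at `2P` has slope
`(b - c + c²) / c`, which gives `x(4P) - c = (b² - bc - c³) / c²`; once the `x`-coordinates of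
`4P` and `-3P` agree, so do their `y`-coordinates.
-/

namespace Ebc

open WeierstrassCurve.Affine Point

variable {K : Type*} [Field K] {b c : K}

lemma b_ne_zero (hΔ : (Ebc b c).Δ ≠ 0) : b ≠ 0 := by
  rintro rfl
  apply hΔ
  simp [WeierstrassCurve.Δ, WeierstrassCurve.b₂, WeierstrassCurve.b₄, WeierstrassCurve.b₆,
    WeierstrassCurve.b₈, Ebc]

lemma nonsingular_of_eq (hΔ : (Ebc b c).Δ ≠ 0) {x y : K}
    (h : y ^ 2 + (1 - c) * x * y - b * y = x ^ 3 - b * x ^ 2) : (Ebc b c).Nonsingular x y :=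
  (equation_iff_nonsingular_of_Δ_ne_zero hΔ).mp <| by
    rw [equation_iff]; simp only [Ebc]; linear_combination h

lemma negY_eq (x y : K) : (Ebc b c).negY x y = -y - (1 - c) * x + b := by
  simp only [negY, Ebc]; ring

variable [DecidableEq K] (hΔ : (Ebc b c).Δ ≠ 0)

lemma two_nsmul_P₀ (h : (Ebc b c).Nonsingular b (b * c)) : 2 • P₀ b c hΔ = some _ _ h := by
  have hy : (0 : K) ≠ (Ebc b c).negY 0 0 := by
    rw [negY_eq]; simpa using (b_ne_zero hΔ).symm
  rw [two_nsmul, P₀, add_self_of_Y_ne hy, some.injEq, slope_of_Y_ne rfl hy]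
  simp only [addX, addY, negAddY, negY, Ebc]
  constructor <;> field_simp <;> ring

lemma three_nsmul_P₀ (h : (Ebc b c).Nonsingular c (b - c)) : 3 • P₀ b c hΔ = some _ _ h := by
  have hx : b ≠ 0 := b_ne_zero hΔ
  rw [succ_nsmul, two_nsmul_P₀ hΔ (nonsingular_of_eq hΔ (by ring)), P₀, add_of_X_ne hx,
    some.injEq, slope_of_X_ne hx]
  simp only [addX, addY, negAddY, negY, Ebc]
  constructor <;> field_simp <;> ring

lemma four_nsmul_P₀_of_c_eq_zero (hc : c = 0) : 4 • P₀ b c hΔ = 0 := by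
  subst hc
  rw [show 4 = 2 * 2 from rfl, mul_nsmul, two_nsmul_P₀ hΔ (nonsingular_of_eq hΔ (by ring)),
    two_nsmul]
  exact add_self_of_Y_eq (by rw [negY_eq]; ring)

lemma four_nsmul_P₀_eq_neg_three_nsmul_P₀_iff_of_c_ne_zero (hc : c ≠ 0) :
    (4 : ℕ) • P₀ b c hΔ = -((3 : ℕ) • P₀ b c hΔ) ↔ b ^ 2 - b * c - c ^ 3 = 0 := by
  have hy : b * c ≠ (Ebc b c).negY b (b * c) := by
    rw [negY_eq]; ring_nf; exact mul_ne_zero (b_ne_zero hΔ) hc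
  have hslope : (Ebc b c).slope b b (b * c) (b * c) = (b - c + c ^ 2) / c := by
    rw [slope_of_Y_ne rfl hy, div_eq_div_iff (sub_ne_zero.mpr hy) hc, negY_eq]
    simp only [Ebc]; ring
  rw [show 4 = 2 * 2 from rfl, mul_nsmul, two_nsmul_P₀ hΔ (nonsingular_of_eq hΔ (by ring)),
    two_nsmul, add_self_of_Y_ne hy, three_nsmul_P₀ hΔ (nonsingular_of_eq hΔ (by ring)), neg_some,
    some.injEq, hslope]
  simp only [addX, addY, negAddY, negY, Ebc]
  constructor
  · rintro ⟨hx, -⟩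
    field_simp at hx
    linear_combination hx
  · intro h
    constructor
    · field_simp
      linear_combination h
    · field_simp
      linear_combination (c ^ 2 - b) * h

lemma four_nsmul_P₀_eq_neg_three_nsmul_P₀_iff :
    (4 : ℕ) • P₀ b c hΔ = -((3 : ℕ) • P₀ b c hΔ) ↔ b ^ 2 - b * c - c ^ 3 = 0 := by
  rcases eq_or_ne c 0 with rfl | hc
  · rw [four_nsmul_P₀_of_c_eq_zero hΔ rfl, three_nsmul_P₀ hΔ (nonsingular_of_eq hΔ (by ring)),
      neg_some]
    exact iff_of_false (some_ne_zero _).symm (by simpa using b_ne_zero hΔ)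
  · exact four_nsmul_P₀_eq_neg_three_nsmul_P₀_iff_of_c_ne_zero hΔ hc

end Ebc

open Classical in
theorem stmt_8 {K : Type*} [Field K] (b c : K) (hΔ : (Ebc b c).Δ ≠ 0) :
    addOrderOf (P₀ b c hΔ) = 7 ↔ b ^ 2 - b * c - c ^ 3 = 0 := by
  have : Fact (Nat.Prime 7) := ⟨by norm_num⟩
  rw [addOrderOf_eq_prime_iff, ← Ebc.four_nsmul_P₀_eq_neg_three_nsmul_P₀_iff hΔ,
    ← add_eq_zero_iff_eq_neg, ← add_nsmul]
  exact and_iff_left (WeierstrassCurve.Affine.Point.some_ne_zero _)
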